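/- Let α > 0, λ ∈ ℝ, φ̃ ∈ ℝ, and set θ = α/2, C = (α²/8)·(φ̃ − α/4)·(φ̃ − 3α/4), D = λ²/8, and δ = 4φ̃/α. Then the real vector space Sol(C,D,θ) of triples (T, l, σ) of smooth functions ℝ → ℝ satisfying, for all t ∈ ℝ, C·l(t) = 0, l″(t) = 2D·l(t), σ′(t) = (θ²/4)·T″(t), and T‴(t) = 8D·T′(t), has dimension 6 if δ ∈ {1, 3}, and dimension 4 otherwise. -/

import Mathlib

open Real

private lemma one_le_inf' : (1 : WithTop ℕ∞) ≤ ((⊤ : ℕ∞) : WithTop ℕ∞) := by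
  exact_mod_cast le_top

private lemma inf_ne_zero' : ((⊤ : ℕ∞) : WithTop ℕ∞) ≠ 0 :=
  (zero_lt_one.trans_le one_le_inf').ne'

private lemma deriv_fun_add' {f g : ℝ → ℝ} (hf : Differentiable ℝ f)
    (hg : Differentiable ℝ g) : deriv (f + g) = deriv f + deriv g :=
  funext fun t => deriv_add (hf t) (hg t)

private lemma deriv_fun_smul' (c : ℝ) {f : ℝ → ℝ} (hf : Differentiable ℝ f) :
    deriv (c • f) = c • deriv f :=
  funext fun t => deriv_const_smul c (hf t)

private lemma smooth_deriv' {f : ℝ → ℝ} (hf : ContDiff ℝ (⊤ : ℕ∞) f) :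
    ContDiff ℝ (⊤ : ℕ∞) (deriv f) :=
  (contDiff_infty_iff_deriv.mp hf).2

/-- The space of triples `(T, l, σ)` of smooth functions satisfying the isovector
system `C·l = 0`, `l″ = 2D·l`, `σ′ = (θ²/4)·T″`, `T‴ = 8D·T′`. -/
def Sol (C D θ : ℝ) : Submodule ℝ ((ℝ → ℝ) × (ℝ → ℝ) × (ℝ → ℝ)) where
  carrier := {p | ContDiff ℝ (⊤ : ℕ∞) p.1 ∧ ContDiff ℝ (⊤ : ℕ∞) p.2.1 ∧
    ContDiff ℝ (⊤ : ℕ∞) p.2.2 ∧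
    (∀ t, C * p.2.1 t = 0) ∧
    (∀ t, deriv (deriv p.2.1) t = 2 * D * p.2.1 t) ∧
    (∀ t, deriv p.2.2 t = θ ^ 2 / 4 * deriv (deriv p.1) t) ∧
    (∀ t, deriv (deriv (deriv p.1)) t = 8 * D * deriv p.1 t)}
  zero_mem' := by
    have h0 : deriv (0 : ℝ → ℝ) = 0 := funext fun x => deriv_const x 0
    refine ⟨contDiff_const, contDiff_const, contDiff_const, ?_, ?_, ?_, ?_⟩ <;>
      intro t <;> simp [h0]
  add_mem' := by
    rintro ⟨T₁, l₁, σ₁⟩ ⟨T₂, l₂, σ₂⟩ ⟨hT₁, hl₁, hσ₁, e₁, e₂, e₃, e₄⟩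
      ⟨hT₂, hl₂, hσ₂, f₁, f₂, f₃, f₄⟩
    have dT₁ : Differentiable ℝ T₁ := hT₁.differentiable inf_ne_zero'
    have dT₂ : Differentiable ℝ T₂ := hT₂.differentiable inf_ne_zero'
    have dl₁ : Differentiable ℝ l₁ := hl₁.differentiable inf_ne_zero'
    have dl₂ : Differentiable ℝ l₂ := hl₂.differentiable inf_ne_zero'
    have dσ₁ : Differentiable ℝ σ₁ := hσ₁.differentiable inf_ne_zero'
    have dσ₂ : Differentiable ℝ σ₂ := hσ₂.differentiable inf_ne_zero'
    have ddl₁ : Differentiable ℝ (deriv l₁) := (smooth_deriv' hl₁).differentiable inf_ne_zero'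
    have ddl₂ : Differentiable ℝ (deriv l₂) := (smooth_deriv' hl₂).differentiable inf_ne_zero'
    have ddT₁ : Differentiable ℝ (deriv T₁) := (smooth_deriv' hT₁).differentiable inf_ne_zero'
    have ddT₂ : Differentiable ℝ (deriv T₂) := (smooth_deriv' hT₂).differentiable inf_ne_zero'
    have dddT₁ : Differentiable ℝ (deriv (deriv T₁)) :=
      (smooth_deriv' (smooth_deriv' hT₁)).differentiable inf_ne_zero'
    have dddT₂ : Differentiable ℝ (deriv (deriv T₂)) :=
      (smooth_deriv' (smooth_deriv' hT₂)).differentiable inf_ne_zero'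
    have hl : deriv (deriv (l₁ + l₂)) = deriv (deriv l₁) + deriv (deriv l₂) := by
      rw [deriv_fun_add' dl₁ dl₂, deriv_fun_add' ddl₁ ddl₂]
    have hT2 : deriv (deriv (T₁ + T₂)) = deriv (deriv T₁) + deriv (deriv T₂) := by
      rw [deriv_fun_add' dT₁ dT₂, deriv_fun_add' ddT₁ ddT₂]
    have hT3 : deriv (deriv (deriv (T₁ + T₂)))
        = deriv (deriv (deriv T₁)) + deriv (deriv (deriv T₂)) := by
      rw [hT2, deriv_fun_add' dddT₁ dddT₂]
    refine ⟨hT₁.add hT₂, hl₁.add hl₂, hσ₁.add hσ₂, ?_, ?_, ?_, ?_⟩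
    · intro t
      simp only [Prod.mk_add_mk, Pi.add_apply, mul_add, e₁ t, f₁ t, add_zero]
    · intro t
      simp only [Prod.mk_add_mk]
      rw [hl]
      simp only [Pi.add_apply, e₂ t, f₂ t]; ring
    · intro t
      simp only [Prod.mk_add_mk]
      rw [hT2, deriv_fun_add' dσ₁ dσ₂]
      simp only [Pi.add_apply, e₃ t, f₃ t]; ring
    · intro t
      simp only [Prod.mk_add_mk]
      rw [hT3, deriv_fun_add' dT₁ dT₂]
      simp only [Pi.add_apply, e₄ t, f₄ t]; ring
  smul_mem' := by
    rintro c ⟨T, l, σ⟩ ⟨hT, hl, hσ, e₁, e₂, e₃, e₄⟩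
    have dT : Differentiable ℝ T := hT.differentiable inf_ne_zero'
    have dl : Differentiable ℝ l := hl.differentiable inf_ne_zero'
    have dσ : Differentiable ℝ σ := hσ.differentiable inf_ne_zero'
    have ddl : Differentiable ℝ (deriv l) := (smooth_deriv' hl).differentiable inf_ne_zero'
    have ddT : Differentiable ℝ (deriv T) := (smooth_deriv' hT).differentiable inf_ne_zero'
    have dddT : Differentiable ℝ (deriv (deriv T)) :=
      (smooth_deriv' (smooth_deriv' hT)).differentiable inf_ne_zero'
    have hl2 : deriv (deriv (c • l)) = c • deriv (deriv l) := by
      rw [deriv_fun_smul' c dl, deriv_fun_smul' c ddl]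
    have hT2 : deriv (deriv (c • T)) = c • deriv (deriv T) := by
      rw [deriv_fun_smul' c dT, deriv_fun_smul' c ddT]
    have hT3 : deriv (deriv (deriv (c • T))) = c • deriv (deriv (deriv T)) := by
      rw [hT2, deriv_fun_smul' c dddT]
    refine ⟨hT.const_smul c, hl.const_smul c, hσ.const_smul c, ?_, ?_, ?_, ?_⟩
    · intro t
      simp only [Prod.smul_mk, Pi.smul_apply, smul_eq_mul]
      rw [mul_comm c (l t), ← mul_assoc, e₁ t, zero_mul]
    · intro t
      simp only [Prod.smul_mk]
      rw [hl2]
      simp only [Pi.smul_apply, smul_eq_mul, e₂ t]; ring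
    · intro t
      simp only [Prod.smul_mk]
      rw [hT2, deriv_fun_smul' c dσ]
      simp only [Pi.smul_apply, smul_eq_mul, e₃ t]; ring
    · intro t
      simp only [Prod.smul_mk]
      rw [hT3, deriv_fun_smul' c dT]
      simp only [Pi.smul_apply, smul_eq_mul, e₄ t]; ring

/-! In the phase coordinates `x = (T, T', T'', σ)` and `y = (l, l')` the equations of `Sol` other
than `C·l = 0` become two linear systems `x' = A x`, `y' = B y`, whose solutions are exactly the
curves `t ↦ exp (t A) x(0)` (existence from the exponential, uniqueness by Grönwall). So sending
initial data to the solution they generate is injective and maps the data with `C·y(0) = 0` onto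
`Sol C D θ`: all of `ℝ⁴ × ℝ²` when `C = 0`, and `ℝ⁴ × 0` otherwise. In the affine model `C`
vanishes exactly when `δ ∈ {1, 3}`. -/

open NormedSpace Module Set
open scoped ContDiff

section LinearODE

variable {E : Type*} [NormedAddCommGroup E] [NormedSpace ℝ E] [CompleteSpace E] (A : E →L[ℝ] E)

theorem hasDerivAt_exp_smul_apply (x₀ : E) (t : ℝ) :
    HasDerivAt (fun s : ℝ => exp (s • A) x₀) (A (exp (t • A) x₀)) t := by
  simpa using ((hasStrictDerivAt_exp_smul_const' (𝕂 := ℝ) A t).hasDerivAt).clm_apply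
    (hasDerivAt_const t x₀)

theorem contDiff_exp_smul_apply {n : WithTop ℕ∞} (x₀ : E) :
    ContDiff ℝ n fun s : ℝ => exp (s • A) x₀ :=
  ((AnalyticOnNhd.contDiff fun x _ => exp_analytic (𝕂 := ℝ) x).comp
    (contDiff_id.smul contDiff_const)).clm_apply contDiff_const

variable {A}

theorem eq_exp_smul_apply_of_hasDerivAt {x : ℝ → E} (hx : ∀ t, HasDerivAt x (A (x t)) t) :
    x = fun t => exp (t • A) (x 0) :=
  ODE_solution_unique_univ (v := fun _ => A) (s := fun _ => univ) (t₀ := 0)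
    (fun _ => A.lipschitz.lipschitzOnWith) (fun t => ⟨hx t, trivial⟩)
    (fun t => ⟨hasDerivAt_exp_smul_apply A (x 0) t, trivial⟩) (by simp)

theorem contDiff_of_hasDerivAt {n : WithTop ℕ∞} {x : ℝ → E}
    (hx : ∀ t, HasDerivAt x (A (x t)) t) : ContDiff ℝ n x := by
  rw [eq_exp_smul_apply_of_hasDerivAt hx]
  exact contDiff_exp_smul_apply A (x 0)

end LinearODE

theorem ContDiff.differentiable_iterate_deriv {f : ℝ → ℝ} (hf : ContDiff ℝ ∞ f) (n : ℕ) :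
    Differentiable ℝ (deriv^[n] f) :=
  (hf.iterate_deriv n).differentiable (by simp)

noncomputable section PhaseSpace

variable (k m : ℝ)

/-- The system `T‴ = k T'`, `σ' = m T''` as a first-order system in `(T, T', T'', σ)`. -/
def tσGenerator : (Fin 4 → ℝ) →L[ℝ] Fin 4 → ℝ :=
  LinearMap.toContinuousLinearMap
    { toFun := fun x => ![x 1, x 2, k * x 1, m * x 2]
      map_add' := fun x y => by ext i; fin_cases i <;> simp [mul_add]
      map_smul' := fun c x => by ext i; fin_cases i <;> simp [mul_left_comm] }

/-- The equation `l'' = k l` as a first-order system in `(l, l')`. -/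
def lGenerator : (Fin 2 → ℝ) →L[ℝ] Fin 2 → ℝ :=
  LinearMap.toContinuousLinearMap
    { toFun := fun x => ![x 1, k * x 0]
      map_add' := fun x y => by ext i; fin_cases i <;> simp [mul_add]
      map_smul' := fun c x => by ext i; fin_cases i <;> simp [mul_left_comm] }

def tσPhase (T σ : ℝ → ℝ) (t : ℝ) : Fin 4 → ℝ := ![T t, deriv T t, deriv (deriv T) t, σ t]

def lPhase (l : ℝ → ℝ) (t : ℝ) : Fin 2 → ℝ := ![l t, deriv l t]

variable {k m}

theorem hasDerivAt_tσGenerator_iff {x : ℝ → Fin 4 → ℝ} {t : ℝ} :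
    HasDerivAt x (tσGenerator k m (x t)) t ↔
      HasDerivAt (x · 0) (x t 1) t ∧ HasDerivAt (x · 1) (x t 2) t ∧
        HasDerivAt (x · 2) (k * x t 1) t ∧ HasDerivAt (x · 3) (m * x t 2) t := by
  simp [hasDerivAt_pi, Fin.forall_fin_succ, tσGenerator]

theorem hasDerivAt_lGenerator_iff {y : ℝ → Fin 2 → ℝ} {t : ℝ} :
    HasDerivAt y (lGenerator k (y t)) t ↔
      HasDerivAt (y · 0) (y t 1) t ∧ HasDerivAt (y · 1) (k * y t 0) t := by
  simp [hasDerivAt_pi, Fin.forall_fin_succ, lGenerator]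

theorem deriv_eq_of_hasDerivAt_tσGenerator {x : ℝ → Fin 4 → ℝ}
    (hx : ∀ t, HasDerivAt x (tσGenerator k m (x t)) t) :
    deriv (x · 0) = (x · 1) ∧ deriv (x · 1) = (x · 2) ∧
      deriv (x · 2) = (fun t => k * x t 1) ∧ deriv (x · 3) = (fun t => m * x t 2) := by
  simp only [hasDerivAt_tσGenerator_iff] at hx
  exact ⟨funext fun t => (hx t).1.deriv, funext fun t => (hx t).2.1.deriv,
    funext fun t => (hx t).2.2.1.deriv, funext fun t => (hx t).2.2.2.deriv⟩

theorem deriv_eq_of_hasDerivAt_lGenerator {y : ℝ → Fin 2 → ℝ}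
    (hy : ∀ t, HasDerivAt y (lGenerator k (y t)) t) :
    deriv (y · 0) = (y · 1) ∧ deriv (y · 1) = (fun t => k * y t 0) := by
  simp only [hasDerivAt_lGenerator_iff] at hy
  exact ⟨funext fun t => (hy t).1.deriv, funext fun t => (hy t).2.deriv⟩

theorem tσPhase_of_hasDerivAt {x : ℝ → Fin 4 → ℝ}
    (hx : ∀ t, HasDerivAt x (tσGenerator k m (x t)) t) : tσPhase (x · 0) (x · 3) = x := by
  obtain ⟨hx0, hx1, -, -⟩ := deriv_eq_of_hasDerivAt_tσGenerator hx
  funext t i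
  fin_cases i <;> simp [tσPhase, hx0, hx1]

theorem lPhase_of_hasDerivAt {y : ℝ → Fin 2 → ℝ}
    (hy : ∀ t, HasDerivAt y (lGenerator k (y t)) t) : lPhase (y · 0) = y := by
  obtain ⟨hy0, -⟩ := deriv_eq_of_hasDerivAt_lGenerator hy
  funext t i
  fin_cases i <;> simp [lPhase, hy0]

theorem hasDerivAt_tσPhase {T σ : ℝ → ℝ} (hT : ContDiff ℝ ∞ T) (hσ : Differentiable ℝ σ)
    (hσ' : ∀ t, deriv σ t = m * deriv (deriv T) t)
    (hT' : ∀ t, deriv (deriv (deriv T)) t = k * deriv T t) (t : ℝ) :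
    HasDerivAt (tσPhase T σ) (tσGenerator k m (tσPhase T σ t)) t := by
  rw [hasDerivAt_tσGenerator_iff]
  refine ⟨(hT.differentiable_iterate_deriv 0 t).hasDerivAt,
    (hT.differentiable_iterate_deriv 1 t).hasDerivAt, ?_, ?_⟩
  · exact hT' t ▸ (hT.differentiable_iterate_deriv 2 t).hasDerivAt
  · exact hσ' t ▸ (hσ t).hasDerivAt

theorem hasDerivAt_lPhase {l : ℝ → ℝ} (hl : ContDiff ℝ ∞ l)
    (hl' : ∀ t, deriv (deriv l) t = k * l t) (t : ℝ) :
    HasDerivAt (lPhase l) (lGenerator k (lPhase l t)) t := by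
  rw [hasDerivAt_lGenerator_iff]
  exact ⟨(hl.differentiable_iterate_deriv 0 t).hasDerivAt,
    hl' t ▸ (hl.differentiable_iterate_deriv 1 t).hasDerivAt⟩

end PhaseSpace

noncomputable section Isovector

variable {C D θ : ℝ}

theorem mem_Sol_of_hasDerivAt {x : ℝ → Fin 4 → ℝ} {y : ℝ → Fin 2 → ℝ}
    (hx : ∀ t, HasDerivAt x (tσGenerator (8 * D) (θ ^ 2 / 4) (x t)) t)
    (hy : ∀ t, HasDerivAt y (lGenerator (2 * D) (y t)) t) (hC : ∀ t, C * y t 0 = 0) :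
    ((x · 0), (y · 0), (x · 3)) ∈ Sol C D θ := by
  obtain ⟨hx0, hx1, hx2, hx3⟩ := deriv_eq_of_hasDerivAt_tσGenerator hx
  obtain ⟨hy0, hy1⟩ := deriv_eq_of_hasDerivAt_lGenerator hy
  have hxs := contDiff_pi.1 (contDiff_of_hasDerivAt (n := ∞) hx)
  refine ⟨hxs 0, contDiff_pi.1 (contDiff_of_hasDerivAt hy) 0, hxs 3, hC,
    fun t => ?_, fun t => ?_, fun t => ?_⟩ <;>
  simp only [hx0, hx1, hx2, hx3, hy0, hy1]

variable (D θ) in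
/-- The solution with initial data `((T, T', T'', σ)(0), (l, l')(0)) = u`. -/
def solOfInitial : (Fin 4 → ℝ) × (Fin 2 → ℝ) →ₗ[ℝ] (ℝ → ℝ) × (ℝ → ℝ) × (ℝ → ℝ) where
  toFun u := (fun t => exp (t • tσGenerator (8 * D) (θ ^ 2 / 4)) u.1 0,
    fun t => exp (t • lGenerator (2 * D)) u.2 0,
    fun t => exp (t • tσGenerator (8 * D) (θ ^ 2 / 4)) u.1 3)
  map_add' u v := by ext <;> simp
  map_smul' c u := by ext <;> simp

def initialData (p : (ℝ → ℝ) × (ℝ → ℝ) × (ℝ → ℝ)) : (Fin 4 → ℝ) × (Fin 2 → ℝ) :=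
  (tσPhase p.1 p.2.2 0, lPhase p.2.1 0)

theorem solOfInitial_mem_Sol {u : (Fin 4 → ℝ) × (Fin 2 → ℝ)} (hu : C • u.2 = 0) :
    solOfInitial D θ u ∈ Sol C D θ :=
  mem_Sol_of_hasDerivAt (hasDerivAt_exp_smul_apply _ u.1) (hasDerivAt_exp_smul_apply _ u.2)
    fun t => by
      rw [← smul_eq_mul, ← Pi.smul_apply, ← map_smul, hu, map_zero, Pi.zero_apply]

variable (D θ) in
theorem initialData_solOfInitial : Function.LeftInverse initialData (solOfInitial D θ) := by
  intro u
  have hx := congrFun (tσPhase_of_hasDerivAt (hasDerivAt_exp_smul_apply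
    (tσGenerator (8 * D) (θ ^ 2 / 4)) u.1)) 0
  have hy := congrFun (lPhase_of_hasDerivAt (hasDerivAt_exp_smul_apply (lGenerator (2 * D)) u.2)) 0
  simp only [zero_smul, NormedSpace.exp_zero, one_apply_eq_self] at hx hy
  exact Prod.ext hx hy

theorem solOfInitial_initialData {p : (ℝ → ℝ) × (ℝ → ℝ) × (ℝ → ℝ)} (hp : p ∈ Sol C D θ) :
    solOfInitial D θ (initialData p) = p := by
  obtain ⟨T, l, σ⟩ := p
  obtain ⟨hT, hl, hσ, -, hl', hσ', hT'⟩ := hp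
  have hx := eq_exp_smul_apply_of_hasDerivAt
    (hasDerivAt_tσPhase hT (hσ.differentiable (by simp)) hσ' hT')
  have hy := eq_exp_smul_apply_of_hasDerivAt (hasDerivAt_lPhase hl hl')
  refine Prod.ext (funext fun t => ?_) (Prod.ext (funext fun t => ?_) (funext fun t => ?_))
  · exact (congrFun (congrFun hx t) 0).symm
  · exact (congrFun (congrFun hy t) 0).symm
  · exact (congrFun (congrFun hx t) 3).symm

theorem Sol_eq_map : Sol C D θ =
    (LinearMap.ker (C • LinearMap.snd ℝ (Fin 4 → ℝ) (Fin 2 → ℝ))).map (solOfInitial D θ) := by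
  ext p
  constructor
  · intro hp
    refine ⟨initialData p, ?_, solOfInitial_initialData hp⟩
    have hCl := hp.2.2.2.1
    have hCl' : C * deriv p.2.1 0 = 0 := by
      simpa [hCl] using (congrFun (deriv_const_mul_field' (v := p.2.1) C) 0).symm
    ext i
    fin_cases i <;> simp [initialData, lPhase, hCl, hCl']
  · rintro ⟨u, hu, rfl⟩
    exact solOfInitial_mem_Sol hu

theorem finrank_Sol : finrank ℝ (Sol C D θ) = if C = 0 then 6 else 4 := by
  rw [Sol_eq_map, ← LinearEquiv.finrank_eq
    (Submodule.equivMapOfInjective _ (initialData_solOfInitial D θ).injective _)]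
  split_ifs with hC
  · rw [hC, zero_smul, LinearMap.ker_zero, finrank_top]
    simp
  · rw [LinearMap.ker_smul _ _ hC, LinearMap.ker_snd,
      LinearMap.finrank_range_of_inj LinearMap.inl_injective]
    simp

end Isovector

theorem affine_C_eq_zero_iff {α phit : ℝ} (hα : α ≠ 0) :
    α ^ 2 / 8 * (phit - α / 4) * (phit - 3 * α / 4) = 0 ↔
      4 * phit / α = 1 ∨ 4 * phit / α = 3 := by
  rw [div_eq_iff hα, div_eq_iff hα]
  simp only [mul_eq_zero, hα, sub_eq_zero, div_eq_zero_iff, pow_eq_zero_iff, ne_eq,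
    OfNat.ofNat_ne_zero, not_false_eq_true, false_or]
  constructor <;> rintro (h | h) <;> [left; right; left; right] <;> linarith

theorem finrank_Sol_affine_model_general (α phit θ C D δ : ℝ) (hα : 0 < α)
    (hC : C = α ^ 2 / 8 * (phit - α / 4) * (phit - 3 * α / 4))
    (hδ : δ = 4 * phit / α) :
    Module.finrank ℝ (Sol C D θ) = if δ = 1 ∨ δ = 3 then 6 else 4 := by
  simp only [finrank_Sol, hC, hδ, affine_C_eq_zero_iff hα.ne']

/-- In the one-factor affine interest rate model with parameters `α > 0`, `λ`, `φ̃`,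
setting `θ = α/2`, `C = (α²/8)(φ̃ − α/4)(φ̃ − 3α/4)`, `D = λ²/8` and `δ = 4φ̃/α`, the
isovector solution space has dimension `6` if `δ ∈ {1, 3}` and dimension `4` otherwise. -/
theorem finrank_Sol_affine_model (α lam phit θ C D δ : ℝ) (hα : 0 < α)
    (hθ : θ = α / 2) (hC : C = α ^ 2 / 8 * (phit - α / 4) * (phit - 3 * α / 4))
    (hD : D = lam ^ 2 / 8) (hδ : δ = 4 * phit / α) :
    Module.finrank ℝ (Sol C D θ) = if δ = 1 ∨ δ = 3 then 6 else 4 :=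
  finrank_Sol_affine_model_general α phit θ C D δ hα hC hδ
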